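/- Let G = □_{i=1}^n K_k be the n-dimensional Hamming graph, A ⊆ V(G), and let H be a projection of G internally spanned by A. Then for every 1 ≤ t ≤ dim(H) there exist indices (ℓ,i,j,d) ∈ ℕ_0^4 with ℓ ≥ t, j ≤ i < t and d ∈ {0,1,2}, and projections H_i, H_j, H_ℓ of G of respective dimensions i, j, ℓ, such that: (1) dist(H_i, H_j) = d; (2) [V(H_i) ∪ V(H_j)] = V(H_ℓ); and (3) H_i and H_j are disjointly internally spanned by A. -/

import Mathlib

open scoped Classical

section Defs

variable {V : Type*}

/-- One round of 2-neighbour bootstrap percolation: a healthy vertex becomes infected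
if it has at least two infected neighbours. -/
def bootStep (G : SimpleGraph V) (A : Set V) : Set V :=
  A ∪ {v | ∃ u w, u ≠ w ∧ G.Adj v u ∧ G.Adj v w ∧ u ∈ A ∧ w ∈ A}

/-- Iterates of the bootstrap process. -/
def bootIter (G : SimpleGraph V) (A : Set V) : ℕ → Set V
  | 0 => A
  | j + 1 => bootStep G (bootIter G A j)

/-- The 2-neighbour bootstrap closure `[A]` of a set `A` of initially infected vertices. -/
def bootClosure (G : SimpleGraph V) (A : Set V) : Set V :=
  ⋃ j, bootIter G A j

/-- Graph distance between two sets of vertices. -/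
noncomputable def setDist (G : SimpleGraph V) (X Y : Set V) : ℕ :=
  sInf {d | ∃ u ∈ X, ∃ v ∈ Y, G.dist u v = d}

/-- A sequence of `m` vertices `v 0, …, v (m-1)` (a "sequentially spanning sequence of
length `m-1`") is sequentially spanning if each vertex lies at distance exactly two from the
bootstrap closure of its predecessors. -/
def SeqSpanSeq (G : SimpleGraph V) (m : ℕ) (v : Fin m → V) : Prop :=
  ∀ i : Fin m, 0 < (i : ℕ) →
    setDist G (bootClosure G (v '' {j | (j : ℕ) < (i : ℕ)})) {v i} = 2

/-- A set `U` is sequentially spanning if its vertices admit an ordering which is a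
sequentially spanning sequence. -/
def SeqSpanSet (G : SimpleGraph V) (U : Set V) : Prop :=
  ∃ (m : ℕ) (v : Fin (m + 1) → V), Function.Injective v ∧ Set.range v = U ∧
    SeqSpanSeq G (m + 1) v

/-- A family `F` of vertex sets is disjointly internally spanned by `A` if there are
pairwise disjoint subsets of `A` internally spanning each member of `F`. -/
def DisjIntSpanned (G : SimpleGraph V) (A : Set V) (F : Set (Set V)) : Prop :=
  ∃ B : Set V → Set V,
    (∀ U ∈ F, B U ⊆ A ∧ bootClosure G (B U ∩ U) = U) ∧
    (∀ U ∈ F, ∀ W ∈ F, U ≠ W → Disjoint (B U) (B W))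

/-- The probability that the `p`-random subset of a finite vertex set satisfies the event `E`. -/
noncomputable def probEvent [Fintype V] [DecidableEq V] (p : ℝ) (E : Set V → Prop) : ℝ :=
  ∑ A : Finset V, if E ↑A then p ^ A.card * (1 - p) ^ (Fintype.card V - A.card) else 0

end Defs

/-- The `n`-dimensional Hamming graph on `[k]^n`: two vertices are adjacent iff they
differ in exactly one coordinate. -/
def hamming (n k : ℕ) : SimpleGraph (Fin n → Fin k) where
  Adj v w := (Finset.univ.filter fun i => v i ≠ w i).card = 1
  symm := by
    constructor
    intro v w h
    have e : (Finset.univ.filter fun i => w i ≠ v i) =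
        Finset.univ.filter fun i => v i ≠ w i :=
      Finset.filter_congr fun i _ => ne_comm
    rw [e]; exact h
  loopless := by
    constructor
    intro v h
    simp at h

/-- The vertex set of the projection of the Hamming graph specified by `S`:
coordinates with `S i = some a` are fixed to `a`, coordinates with `S i = none` are free. -/
def projSet {n k : ℕ} (S : Fin n → Option (Fin k)) : Set (Fin n → Fin k) :=
  {v | ∀ i : Fin n, ∀ a : Fin k, S i = some a → v i = a}

/-- The dimension of a projection: the number of free coordinates. -/
def projDim {n k : ℕ} (S : Fin n → Option (Fin k)) : ℕ :=
  (Finset.univ.filter fun i => S i = none).card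

/-- Probability that the Hamming graph percolates from the `p`-random subset. -/
noncomputable def percProb (n k : ℕ) (p : ℝ) : ℝ :=
  probEvent p (fun A => bootClosure (hamming n k) A = Set.univ)

/-- Probability that the projection `S` is internally spanned by the `p`-random subset. -/
noncomputable def intSpanProb (n k : ℕ) (p : ℝ) (S : Fin n → Option (Fin k)) : ℝ :=
  probEvent p (fun A => bootClosure (hamming n k) (A ∩ projSet S) = projSet S)

/-- `p_* = n^{-2} k^{-2√n + 1}`. -/
noncomputable def pStar (n k : ℕ) : ℝ :=
  (n : ℝ) ^ (-2 : ℝ) * (k : ℝ) ^ (-2 * Real.sqrt n + 1)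

/-- The critical probability for 2-neighbour bootstrap percolation on the Hamming graph. -/
noncomputable def pc (n k : ℕ) : ℝ :=
  sInf {p : ℝ | 0 < p ∧ p < 1 ∧ 1 / 2 ≤ percProb n k p}

/-- A canonical projection of dimension `m` (the first `m` coordinates are free,
the remaining ones are fixed to `x`). -/
def canonProj (n k m : ℕ) (x : Fin k) : Fin n → Option (Fin k) :=
  fun i => if (i : ℕ) < m then none else some x

/-- The set `I_{H,t}` of admissible indices `(ℓ, i, j, d)` for a projection of dimension `m`
and threshold `t`. -/
def indexSet (m t : ℕ) : Finset (ℕ × ℕ × ℕ × ℕ) :=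
  ((Finset.range (m + 1)) ×ˢ (Finset.range (m + 1)) ×ˢ (Finset.range (m + 1)) ×ˢ
      (Finset.range 3)).filter
    fun q => t ≤ q.1 ∧ q.1 ≤ min (q.2.1 + q.2.2.1 + q.2.2.2) m ∧
      q.2.2.1 ≤ q.2.1 ∧ q.2.1 < t ∧ q.2.1 + q.2.2.2 < q.1

/-- `U_{H,t}(ℓ,i,j,d)`: the number of candidate quadruples `(H_ℓ, {H_i, H_j}, d)` inside the
projection `SH` at threshold `t` with dimensions `ℓ, i, j` and distance `d`; the pair
`{H_i, H_j}` is unordered. -/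
noncomputable def candCountIn (n k : ℕ) (SH : Fin n → Option (Fin k)) (t : ℕ)
    (q : ℕ × ℕ × ℕ × ℕ) : ℕ :=
  Nat.card {c : (Fin n → Option (Fin k)) × Sym2 (Fin n → Option (Fin k)) //
    t ≤ q.1 ∧ q.2.2.1 ≤ q.2.1 ∧ q.2.1 < t ∧ q.2.2.2 ≤ 2 ∧
    projDim c.1 = q.1 ∧ projSet c.1 ⊆ projSet SH ∧
    ∃ a b, c.2 = s(a, b) ∧ projDim a = q.2.1 ∧ projDim b = q.2.2.1 ∧
      setDist (hamming n k) (projSet a) (projSet b) = q.2.2.2 ∧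
      bootClosure (hamming n k) (projSet a ∪ projSet b) = projSet c.1}

/-- `U_{G,t}(ℓ,i,j,d)`: the number of candidate quadruples in the whole Hamming graph. -/
noncomputable def candCount (n k t : ℕ) (q : ℕ × ℕ × ℕ × ℕ) : ℕ :=
  candCountIn n k (fun _ => none) t q

/-- The constants `Ψ_m`. -/
noncomputable def Psi (n k : ℕ) : ℕ → ℝ
  | 0 => 1
  | m + 1 =>
    if m + 1 ≤ 14 then (1 / 2) * (9 * Real.sqrt 2 / 10) ^ (m + 1)
    else Psi n k m * (1 + (k : ℝ) ^ (-(((m : ℝ) + 1) - 11) / 2)) * (1 + 4 / (n : ℝ))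

/-- The function `Φ(m) = Ψ_m p^{m/2+1} m! 2^{-m/2} (k-1)^m k^{(m²+2m)/4}`. -/
noncomputable def Phi (n k : ℕ) (p : ℝ) (m : ℕ) : ℝ :=
  Psi n k m * p ^ ((m : ℝ) / 2 + 1) * (Nat.factorial m : ℝ) * (2 : ℝ) ^ (-(m : ℝ) / 2) *
    ((k : ℝ) - 1) ^ m * (k : ℝ) ^ (((m : ℝ) ^ 2 + 2 * (m : ℝ)) / 4)

/-- `|S_{m-1}|`: the number of sequentially spanning sequences with `m` vertices
(i.e. of length `m - 1`) in the Hamming graph. -/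
noncomputable def seqCount (n k m : ℕ) : ℕ :=
  Nat.card {v : Fin m → (Fin n → Fin k) // SeqSpanSeq (hamming n k) m v}

/-- `|P_{ℓ,i}|`: the number of unordered pairs of sequentially spanning sequences of
length `ℓ` whose vertex sets intersect in exactly `i` vertices. -/
noncomputable def pairCount (n k ℓ i : ℕ) : ℕ :=
  Nat.card {q : Sym2 (Fin (ℓ + 1) → (Fin n → Fin k)) //
    ∃ a b, q = s(a, b) ∧ SeqSpanSeq (hamming n k) (ℓ + 1) a ∧
      SeqSpanSeq (hamming n k) (ℓ + 1) b ∧ (Set.range a ∩ Set.range b).ncard = i}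


/-!
Start from the singletons of `A ∩ H`, each spanning a projection of dimension `0`, and keep
merging two members of the family whose spanned projections are at distance at most two: the
closure of the union of two such projections is the projection that is free wherever they
differ, and it is spanned by the (disjoint) union of their seeds. The first merge reaching
dimension `t` yields the pair. Merging cannot stop before: if all spanned projections were
pairwise at distance more than two, their union would be closed, hence contain `[A ∩ H] = H`,
and since `H` is connected it would lie inside a single one of them, of dimension `< t`.
-/

section Development

open Function

section Graph

variable {V : Type*} {G : SimpleGraph V} {A B U : Set V}

def IsBootClosed (G : SimpleGraph V) (U : Set V) : Prop :=
  ∀ ⦃v u w⦄, u ≠ w → G.Adj v u → G.Adj v w → u ∈ U → w ∈ U → v ∈ U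

lemma bootIter_mono (G : SimpleGraph V) (A : Set V) : Monotone (bootIter G A) :=
  monotone_nat_of_le_succ fun _ => Set.subset_union_left

lemma subset_bootClosure (G : SimpleGraph V) (A : Set V) : A ⊆ bootClosure G A :=
  Set.subset_iUnion (bootIter G A) 0

lemma isBootClosed_bootClosure (G : SimpleGraph V) (A : Set V) :
    IsBootClosed G (bootClosure G A) := by
  intro v u w hne hu hw hu' hw'
  obtain ⟨j₁, hj₁⟩ := Set.mem_iUnion.1 hu'
  obtain ⟨j₂, hj₂⟩ := Set.mem_iUnion.1 hw'
  refine Set.mem_iUnion.2 ⟨max j₁ j₂ + 1, Or.inr ⟨u, w, hne, hu, hw, ?_, ?_⟩⟩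
  · exact bootIter_mono G A (le_max_left _ _) hj₁
  · exact bootIter_mono G A (le_max_right _ _) hj₂

lemma IsBootClosed.bootClosure_subset (hU : IsBootClosed G U) (hA : A ⊆ U) :
    bootClosure G A ⊆ U := by
  refine Set.iUnion_subset fun j => ?_
  induction j with
  | zero => exact hA
  | succ j ih =>
    rintro v (hv | ⟨u, w, hne, hu, hw, hu', hw'⟩)
    exacts [ih hv, hU hne hu hw (ih hu') (ih hw')]

lemma bootClosure_mono (h : A ⊆ B) : bootClosure G A ⊆ bootClosure G B :=
  (isBootClosed_bootClosure G B).bootClosure_subset (h.trans (subset_bootClosure G B))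

lemma bootClosure_singleton (G : SimpleGraph V) (a : V) : bootClosure G {a} = {a} := by
  refine subset_antisymm (IsBootClosed.bootClosure_subset ?_ subset_rfl) (subset_bootClosure G _)
  intro v u w hne _ _ hu hw
  exact absurd (hu.trans hw.symm) hne

lemma bootClosure_union_bootClosure (G : SimpleGraph V) (A B : Set V) :
    bootClosure G (bootClosure G A ∪ bootClosure G B) = bootClosure G (A ∪ B) := by
  refine subset_antisymm ((isBootClosed_bootClosure _ _).bootClosure_subset
    (Set.union_subset (bootClosure_mono Set.subset_union_left)
      (bootClosure_mono Set.subset_union_right))) ?_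
  exact bootClosure_mono (Set.union_subset_union (subset_bootClosure G A) (subset_bootClosure G B))

lemma bootClosure_inter_eq (h : bootClosure G B = U) : bootClosure G (B ∩ U) = U := by
  rw [Set.inter_eq_left.2 (h ▸ subset_bootClosure G B), h]

lemma setDist_le_dist {X Y : Set V} {u v : V} (hu : u ∈ X) (hv : v ∈ Y) :
    setDist G X Y ≤ G.dist u v :=
  Nat.sInf_le ⟨u, hu, v, hv, rfl⟩

lemma setDist_comm (G : SimpleGraph V) (X Y : Set V) : setDist G X Y = setDist G Y X := by
  unfold setDist
  congr 1
  ext d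
  constructor <;> exact fun ⟨u, hu, v, hv, h⟩ => ⟨v, hv, u, hu, SimpleGraph.dist_comm.trans h⟩

lemma isBootClosed_sUnion {𝒰 : Set (Set V)} (h𝒰 : ∀ U ∈ 𝒰, IsBootClosed G U)
    (hfar : 𝒰.Pairwise fun U W => 2 < setDist G U W) : IsBootClosed G (⋃₀ 𝒰) := by
  rintro v u w hne hu hw ⟨U, hU, hu'⟩ ⟨W, hW, hw'⟩
  obtain rfl | hUW := eq_or_ne U W
  · exact ⟨U, hU, h𝒰 U hU hne hu hw hu' hw'⟩
  · have : G.dist u w ≤ 2 := SimpleGraph.dist_le (.cons hu.symm (.cons hw .nil))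
    exact absurd ((setDist_le_dist hu' hw').trans this) (hfar hU hW hUW).not_ge

end Graph

section Hamming

variable {n k : ℕ}

lemma hamming_adj_iff {u v : Fin n → Fin k} : (hamming n k).Adj u v ↔ hammingDist u v = 1 :=
  Iff.rfl

lemma hammingDist_update_left {u v : Fin n → Fin k} {i : Fin n} (h : u i ≠ v i) :
    hammingDist (update u i (v i)) v + 1 = hammingDist u v := by
  unfold hammingDist
  rw [← Finset.card_insert_of_notMem (s := {j | update u i (v i) j ≠ v j}) (a := i) (by simp)]
  congr 1
  ext j
  by_cases hj : j = i <;> simp [hj, h]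

lemma hamming_adj_update {u : Fin n → Fin k} {i : Fin n} {c : Fin k} (h : u i ≠ c) :
    (hamming n k).Adj u (update u i c) := by
  rw [hamming_adj_iff, hammingDist_comm]
  simpa [eq_comm] using hammingDist_update_left (u := update u i c) (v := u) (i := i)
    (by simpa using h.symm)

lemma hammingDist_le_length {u v : Fin n → Fin k} (p : (hamming n k).Walk u v) :
    hammingDist u v ≤ p.length := by
  induction p with
  | nil => simp
  | cons h p ih =>
    rw [SimpleGraph.Walk.length_cons]
    exact (hammingDist_triangle _ _ _).trans (by rw [hamming_adj_iff.1 h]; omega)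

lemma eq_of_hamming_adj_of_ne {u v : Fin n → Fin k} (h : (hamming n k).Adj u v) {i j : Fin n}
    (hi : u i ≠ v i) (hji : j ≠ i) : u j = v j := by
  by_contra hj
  exact hji (Finset.card_le_one.1 h.le j (by simpa using hj) i (by simpa using hi))

end Hamming

section Projection

variable {n k : ℕ} {S S' R : Fin n → Option (Fin k)}

lemma isBootClosed_projSet (S : Fin n → Option (Fin k)) :
    IsBootClosed (hamming n k) (projSet S) := by
  intro v u w huw hu hw hu' hw' i a ha
  by_contra hvi
  apply huw
  funext j
  by_cases hji : j = i
  · rw [hji, hu' i a ha, hw' i a ha]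
  · rw [← eq_of_hamming_adj_of_ne hu (by rwa [hu' i a ha]) hji,
      ← eq_of_hamming_adj_of_ne hw (by rwa [hw' i a ha]) hji]

lemma update_mem_projSet {v : Fin n → Fin k} (hv : v ∈ projSet S) {i : Fin n} (hi : S i = none)
    (c : Fin k) : update v i c ∈ projSet S := by
  intro j a hj
  have hji : j ≠ i := by rintro rfl; simp [hi] at hj
  rw [update_of_ne hji]
  exact hv j a hj

lemma projSet_nonempty (hk : 0 < k) (S : Fin n → Option (Fin k)) : (projSet S).Nonempty :=
  ⟨fun i => (S i).getD ⟨0, hk⟩, fun i a h => by simp [h]⟩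

lemma projSet_subset_of_adj_closed {T : Set (Fin n → Fin k)} {w : Fin n → Fin k}
    (hw : w ∈ projSet S) (hwT : w ∈ T)
    (hT : ∀ x ∈ projSet S, x ∈ T → ∀ y ∈ projSet S, (hamming n k).Adj x y → y ∈ T) :
    projSet S ⊆ T := by
  intro y hy
  suffices ∀ m, ∀ x ∈ projSet S, x ∈ T → hammingDist x y = m → y ∈ T from
    this _ w hw hwT rfl
  intro m
  induction m with
  | zero => exact fun x _ hx hxy => hammingDist_eq_zero.1 hxy ▸ hx
  | succ m ih =>
    intro x hx hxT hxy
    obtain ⟨i, hi⟩ := Function.ne_iff.1 (hammingDist_ne_zero.1 (by omega : hammingDist x y ≠ 0))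
    have hx' : update x i (y i) ∈ projSet S := by
      intro j a hj
      by_cases hji : j = i
      · subst hji; simpa using hy j a hj
      · simpa [update_of_ne hji] using hx j a hj
    refine ih _ hx' (hT x hx hxT _ hx' (hamming_adj_update hi)) ?_
    have := hammingDist_update_left hi
    omega

lemma hamming_reachable (u v : Fin n → Fin k) : (hamming n k).Reachable u v := by
  have huniv : ∀ x : Fin n → Fin k, x ∈ projSet fun _ => none := fun _ _ _ h => nomatch h
  exact projSet_subset_of_adj_closed (T := {y | (hamming n k).Reachable u y}) (huniv u) .rfl
    (fun _ _ hx _ _ hxy => hx.trans hxy.reachable) (huniv v)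

lemma hammingDist_le_dist (u v : Fin n → Fin k) : hammingDist u v ≤ (hamming n k).dist u v := by
  obtain ⟨p, hp⟩ := (hamming_reachable u v).exists_walk_length_eq_dist
  exact hp ▸ hammingDist_le_length p

lemma projDim_le_of_projSet_subset (hk : 2 ≤ k) (h : projSet S ⊆ projSet S') :
    projDim S ≤ projDim S' := by
  refine Finset.card_le_card fun i hi => ?_
  simp only [Finset.mem_filter, Finset.mem_univ, true_and] at hi ⊢
  by_contra hS'
  obtain ⟨a, ha⟩ := Option.ne_none_iff_exists'.1 hS'
  obtain ⟨v, hv⟩ := projSet_nonempty (by omega) S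
  obtain ⟨c, hc⟩ := Fintype.exists_ne_of_one_lt_card (by simp; omega) a
  simpa [hc] using h (update_mem_projSet hv hi c) i a ha

lemma exists_projSet_subset_of_subset_sUnion (hk : 0 < k) {𝒰 : Set (Set (Fin n → Fin k))}
    (hcov : projSet S ⊆ ⋃₀ 𝒰) (hfar : 𝒰.Pairwise fun U W => 1 < setDist (hamming n k) U W) :
    ∃ U ∈ 𝒰, projSet S ⊆ U := by
  obtain ⟨w, hw⟩ := projSet_nonempty hk S
  obtain ⟨U, hU, hwU⟩ := hcov hw
  refine ⟨U, hU, projSet_subset_of_adj_closed hw hwU fun x _ hxU y hy hxy => ?_⟩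
  obtain ⟨W, hW, hyW⟩ := hcov hy
  obtain rfl | hUW := eq_or_ne U W
  · exact hyW
  · have := (setDist_le_dist hxU hyW).trans (SimpleGraph.dist_eq_one_iff_adj.2 hxy).le
    exact absurd (hfar hU hW hUW) this.not_gt

lemma update_mem_projSet_update {v : Fin n → Fin k} {i : Fin n} {o o' : Option (Fin k)}
    (hv : v ∈ projSet (update R i o)) {c : Fin k} (hc : ∀ a, o' = some a → c = a) :
    update v i c ∈ projSet (update R i o') := by
  intro j a ha
  by_cases hj : j = i
  · subst hj; simpa using hc a (by simpa using ha)
  · simpa [hj] using hv j a (by simpa [hj] using ha)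

lemma IsBootClosed.mem_of_update_mem {C : Set (Fin n → Fin k)} (hC : IsBootClosed (hamming n k) C)
    {v : Fin n → Fin k} {i : Fin n} {a c : Fin k} (hac : a ≠ c)
    (ha : update v i a ∈ C) (hc : update v i c ∈ C) : v ∈ C := by
  by_cases hva : v i = a
  · simpa [← hva] using ha
  by_cases hvc : v i = c
  · simpa [← hvc] using hc
  refine hC ?_ (hamming_adj_update hva) (hamming_adj_update hvc) ha hc
  exact fun h => hac (by simpa using congrFun h i)

/-- The layer through `w` parallel to `projSet R` fills up by connectivity, and then every line
in direction `i` meets two filled layers. -/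
lemma IsBootClosed.projSet_update_none_subset {C : Set (Fin n → Fin k)}
    (hC : IsBootClosed (hamming n k) C) (hR : projSet R ⊆ C) {i : Fin n} {a : Fin k}
    (ha : R i = some a) {w : Fin n → Fin k} (hwC : w ∈ C) (hwR : w ∈ projSet (update R i none))
    (hwi : w i ≠ a) : projSet (update R i none) ⊆ C := by
  have hR' : ∀ {v o}, v ∈ projSet (update R i o) → update v i a ∈ projSet R := fun hv => by
    simpa [← ha] using update_mem_projSet_update hv (o' := some a) (c := a) (by simp)
  have hlayer : projSet (update R i (some (w i))) ⊆ C := by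
    refine projSet_subset_of_adj_closed (w := w) ?_ hwC fun x hx hxC y hy hxy => ?_
    · simpa using update_mem_projSet_update hwR (c := w i) (o' := some (w i)) (by simp)
    · have hxi : x i = w i := hx i _ (by simp)
      have hyi : y i = w i := hy i _ (by simp)
      refine hC (fun h => hwi ?_) hxy.symm (hamming_adj_update (hyi ▸ hwi)) hxC (hR (hR' hy))
      simpa [hxi] using congrFun h i
  exact fun v hv => hC.mem_of_update_mem hwi.symm (hR (hR' hv))
    (hlayer (update_mem_projSet_update hv (by simp)))

def freeOn (S : Fin n → Option (Fin k)) (T : Finset (Fin n)) : Fin n → Option (Fin k) :=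
  fun i => if i ∈ T then none else S i

lemma mem_projSet_freeOn {v : Fin n → Fin k} {T : Finset (Fin n)} :
    v ∈ projSet (freeOn S T) ↔ ∀ i ∉ T, ∀ a, S i = some a → v i = a := by
  refine forall_congr' fun i => ?_
  by_cases hi : i ∈ T <;> simp [freeOn, hi]

@[simp]
lemma freeOn_empty (S : Fin n → Option (Fin k)) : freeOn S ∅ = S := rfl

lemma projSet_freeOn_mono {T T' : Finset (Fin n)} (h : T ⊆ T') :
    projSet (freeOn S T) ⊆ projSet (freeOn S T') := fun _ hv =>
  mem_projSet_freeOn.2 fun i hi => mem_projSet_freeOn.1 hv i fun hiT => hi (h hiT)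

lemma freeOn_insert (S : Fin n → Option (Fin k)) (T : Finset (Fin n)) (i : Fin n) :
    freeOn S (insert i T) = update (freeOn S T) i none := by
  funext j
  by_cases hj : j = i <;> simp [freeOn, hj]

lemma IsBootClosed.projSet_freeOn_union_subset {C : Set (Fin n → Fin k)}
    (hC : IsBootClosed (hamming n k) C) {T : Finset (Fin n)} (hT : projSet (freeOn S T) ⊆ C)
    (E : Finset (Fin n))
    (hE : ∀ i ∈ E, ∀ a, S i = some a → ∃ w ∈ C, w ∈ projSet (freeOn S (insert i T)) ∧ w i ≠ a) :
    projSet (freeOn S (T ∪ E)) ⊆ C := by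
  induction E using Finset.induction_on with
  | empty => simpa using hT
  | insert i E hiE ih =>
    have hC' := ih fun j hj => hE j (Finset.mem_insert_of_mem hj)
    rw [Finset.union_insert, freeOn_insert]
    rcases hS : freeOn S (T ∪ E) i with _ | a
    · simpa [← hS] using hC'
    · have hiT : i ∉ T ∪ E := fun h => by simp [freeOn, h] at hS
      have hSi : S i = some a := by simpa [freeOn, hiT] using hS
      obtain ⟨w, hwC, hwT, hwi⟩ := hE i (Finset.mem_insert_self i E) a hSi
      refine hC.projSet_update_none_subset hC' hS hwC ?_ hwi
      rw [← freeOn_insert]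
      exact projSet_freeOn_mono (Finset.insert_subset_insert i Finset.subset_union_left) hwT

def mergeProj (S S' : Fin n → Option (Fin k)) : Fin n → Option (Fin k) :=
  freeOn S {i | S i ≠ S' i}

lemma projSet_subset_mergeProj_left : projSet S ⊆ projSet (mergeProj S S') :=
  fun _ hv => mem_projSet_freeOn.2 fun i _ => hv i

lemma projSet_subset_mergeProj_right : projSet S' ⊆ projSet (mergeProj S S') :=
  fun _ hv => mem_projSet_freeOn.2 fun i hi a ha => hv i a (by simp [ha] at hi; exact hi.symm)

def conflicts (S S' : Fin n → Option (Fin k)) : Finset (Fin n) :=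
  {i | S i ≠ S' i ∧ (S i).isSome ∧ (S' i).isSome}

lemma conflicts_subset : conflicts S S' ⊆ ({i | S i ≠ S' i} : Finset (Fin n)) :=
  fun _ h => by simp only [conflicts, Finset.mem_filter] at h ⊢; exact ⟨h.1, h.2.1⟩

/-- The point of `projSet S` that agrees with `projSet S'` wherever possible. -/
def basePoint (S S' : Fin n → Option (Fin k)) (z : Fin k) : Fin n → Fin k :=
  fun i => ((S i).or (S' i)).getD z

lemma basePoint_mem (S S' : Fin n → Option (Fin k)) (z : Fin k) : basePoint S S' z ∈ projSet S :=
  fun i a h => by simp [basePoint, h]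

lemma basePoint_eq_basePoint_iff {z : Fin k} {i : Fin n} :
    basePoint S S' z i = basePoint S' S z i ↔ i ∉ conflicts S S' := by
  rcases hS : S i with _ | a <;> rcases hS' : S' i with _ | a' <;>
    simp [basePoint, conflicts, hS, hS']

lemma hammingDist_basePoint (S S' : Fin n → Option (Fin k)) (z : Fin k) :
    hammingDist (basePoint S S' z) (basePoint S' S z) = (conflicts S S').card := by
  unfold hammingDist
  congr 1
  ext i
  simp [basePoint_eq_basePoint_iff]

lemma card_conflicts_le_setDist (hk : 0 < k) (S S' : Fin n → Option (Fin k)) :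
    (conflicts S S').card ≤ setDist (hamming n k) (projSet S) (projSet S') := by
  obtain ⟨u, hu, v, hv, huv⟩ := Nat.sInf_mem
    (s := {d | ∃ u ∈ projSet S, ∃ v ∈ projSet S', (hamming n k).dist u v = d})
    ⟨_, _, basePoint_mem S S' ⟨0, hk⟩, _, basePoint_mem S' S ⟨0, hk⟩, rfl⟩
  rw [setDist, ← huv]
  refine (Finset.card_le_card fun i hi => ?_).trans (hammingDist_le_dist u v)
  obtain ⟨hne, ⟨a, ha⟩, ⟨a', ha'⟩⟩ : S i ≠ S' i ∧ (∃ a, S i = some a) ∧ ∃ a', S' i = some a' := by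
    simpa [conflicts, Option.isSome_iff_exists] using hi
  simpa [hu i a ha, hv i a' ha'] using fun h => hne (by rw [ha, ha', h])

lemma hammingDist_add_hammingDist_of_between {u v w : Fin n → Fin k}
    (hw : ∀ j, w j = u j ∨ w j = v j) :
    hammingDist u w + hammingDist w v = hammingDist u v := by
  unfold hammingDist
  rw [← Finset.card_union_of_disjoint]
  · congr 1
    ext j
    rcases hw j with h | h <;> simp [h, ne_comm]
  · refine Finset.disjoint_filter.2 fun j _ huw hwv => ?_
    rcases hw j with h | h
    exacts [huw h.symm, hwv h]

lemma IsBootClosed.mem_of_between {C : Set (Fin n → Fin k)} (hC : IsBootClosed (hamming n k) C)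
    {u v w : Fin n → Fin k} (hu : u ∈ C) (hv : v ∈ C) (huv : hammingDist u v ≤ 2)
    (hw : ∀ j, w j = u j ∨ w j = v j) : w ∈ C := by
  have hsum := hammingDist_add_hammingDist_of_between hw
  rcases Nat.eq_zero_or_pos (hammingDist u w) with h | h
  · exact hammingDist_eq_zero.1 h ▸ hu
  rcases Nat.eq_zero_or_pos (hammingDist w v) with h' | h'
  · exact (hammingDist_eq_zero.1 h').symm ▸ hv
  refine hC (hammingDist_ne_zero.1 (by omega)) (hamming_adj_iff.2 ?_) (hamming_adj_iff.2 ?_) hu hv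
  · rw [hammingDist_comm]; omega
  · omega

/-- The conflicting coordinates are freed one at a time, each using the corner
`update b i (b' i)` of the square spanned by the two base points `b`, `b'`. -/
lemma IsBootClosed.projSet_freeOn_conflicts_subset {C : Set (Fin n → Fin k)}
    (hC : IsBootClosed (hamming n k) C) (hSC : projSet S ⊆ C) (hS'C : projSet S' ⊆ C)
    (hD : (conflicts S S').card ≤ 2) (z : Fin k) : projSet (freeOn S (conflicts S S')) ⊆ C := by
  set b := basePoint S S' z
  set b' := basePoint S' S z
  have hbb' : hammingDist b b' ≤ 2 := (hammingDist_basePoint S S' z).trans_le hD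
  refine Finset.empty_union (conflicts S S') ▸ hC.projSet_freeOn_union_subset
    (by rwa [freeOn_empty]) _ fun i hi a ha => ⟨update b i (b' i), ?_, ?_, ?_⟩
  · refine hC.mem_of_between (hSC (basePoint_mem S S' z)) (hS'C (basePoint_mem S' S z)) hbb'
      fun j => ?_
    by_cases hj : j = i <;> simp [hj, b, b']
  · refine mem_projSet_freeOn.2 fun j hj c hc => ?_
    rw [update_of_ne (by simpa using hj)]
    exact basePoint_mem S S' z j c hc
  · rw [update_self, ← basePoint_mem S S' z i a ha]
    exact fun h => basePoint_eq_basePoint_iff.1 h.symm hi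

/-- Once the conflicts are free, every remaining coordinate fixed by `S` but not by `S'` is
freed using a neighbour of `basePoint S' S z` inside `projSet S'`. -/
lemma IsBootClosed.projSet_mergeProj_subset (hk : 2 ≤ k) {C : Set (Fin n → Fin k)}
    (hC : IsBootClosed (hamming n k) C) (hSC : projSet S ⊆ C) (hS'C : projSet S' ⊆ C)
    (hD : (conflicts S S').card ≤ 2) : projSet (mergeProj S S') ⊆ C := by
  set z : Fin k := ⟨0, by omega⟩
  have hfree := hC.projSet_freeOn_union_subset (hC.projSet_freeOn_conflicts_subset hSC hS'C hD z)
    (({i | S i ≠ S' i} : Finset (Fin n)) \ conflicts S S') fun i hi a ha => by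
      have hS'i : S' i = none := by
        simp only [conflicts, Finset.mem_sdiff, Finset.mem_filter, Finset.mem_univ, ha,
          Option.isSome_some, true_and, not_and, Option.not_isSome_iff_eq_none] at hi
        exact hi.2 hi.1
      obtain ⟨c, hc⟩ := Fintype.exists_ne_of_one_lt_card (by simp; omega) a
      refine ⟨update (basePoint S' S z) i c,
        hS'C (update_mem_projSet (basePoint_mem S' S z) hS'i c), ?_, by simpa⟩
      refine mem_projSet_freeOn.2 fun j hj x hx => ?_
      obtain ⟨hji, hjD⟩ : j ≠ i ∧ j ∉ conflicts S S' := by simpa using hj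
      rw [update_of_ne hji, ← basePoint_eq_basePoint_iff.2 hjD]
      exact basePoint_mem S S' z j x hx
  rwa [Finset.union_sdiff_of_subset conflicts_subset] at hfree

theorem bootClosure_projSet_union (hk : 2 ≤ k)
    (h : setDist (hamming n k) (projSet S) (projSet S') ≤ 2) :
    bootClosure (hamming n k) (projSet S ∪ projSet S') = projSet (mergeProj S S') :=
  subset_antisymm ((isBootClosed_projSet _).bootClosure_subset
      (Set.union_subset projSet_subset_mergeProj_left projSet_subset_mergeProj_right))
    ((isBootClosed_bootClosure _ _).projSet_mergeProj_subset hk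
      (Set.subset_union_left.trans (subset_bootClosure _ _))
      (Set.subset_union_right.trans (subset_bootClosure _ _))
      ((card_conflicts_le_setDist (by omega) S S').trans h))

end Projection

section SeedFamily

variable {n k t : ℕ} {A : Set (Fin n → Fin k)} {SH : Fin n → Option (Fin k)}
  {𝓑 : Finset (Set (Fin n → Fin k))}

structure IsSeedFamily (A : Set (Fin n → Fin k)) (SH : Fin n → Option (Fin k)) (t : ℕ)
    (𝓑 : Finset (Set (Fin n → Fin k))) : Prop where
  pairwiseDisjoint : (𝓑 : Set (Set (Fin n → Fin k))).PairwiseDisjoint id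
  covers : A ∩ projSet SH ⊆ ⋃₀ 𝓑
  subset : ∀ B ∈ 𝓑, B ⊆ A
  bootClosure_eq : ∀ B ∈ 𝓑, ∃ S, bootClosure (hamming n k) B = projSet S ∧
    projSet S ⊆ projSet SH ∧ projDim S < t

lemma isSeedFamily_singletons (ht : 0 < t) :
    IsSeedFamily A SH t ((A ∩ projSet SH).toFinset.image singleton) := by
  refine ⟨?_, fun v hv => ⟨{v}, by simpa using hv, rfl⟩, ?_, ?_⟩
  · intro _ hB _ hB' hne
    obtain ⟨a, -, rfl⟩ := Finset.mem_image.1 hB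
    obtain ⟨a', -, rfl⟩ := Finset.mem_image.1 hB'
    exact Set.disjoint_singleton.2 fun h => hne (h ▸ rfl)
  · simp only [Finset.mem_image, Set.mem_toFinset]
    rintro _ ⟨a, ha, rfl⟩
    exact Set.singleton_subset_iff.2 ha.1
  · simp only [Finset.mem_image, Set.mem_toFinset]
    rintro _ ⟨a, ha, rfl⟩
    have hproj : projSet (some ∘ a) = {a} := by
      ext v
      exact ⟨fun hv => funext fun i => hv i (a i) rfl, by rintro rfl i b hb; simpa using hb⟩
    refine ⟨some ∘ a, by rw [bootClosure_singleton, hproj], by simpa [hproj] using ha.2, ?_⟩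
    simpa [projDim] using ht

lemma IsSeedFamily.merge (h𝓑 : IsSeedFamily A SH t 𝓑) {B₁ B₂ : Set (Fin n → Fin k)}
    (hB₁ : B₁ ∈ 𝓑) (hB₂ : B₂ ∈ 𝓑) {S : Fin n → Option (Fin k)}
    (hS : bootClosure (hamming n k) (B₁ ∪ B₂) = projSet S) (hdim : projDim S < t) :
    IsSeedFamily A SH t (insert (B₁ ∪ B₂) (𝓑 \ {B₁, B₂})) := by
  have hsub : ∀ {B}, B ∈ 𝓑 → B ⊆ projSet SH := fun hB => by
    obtain ⟨S, hS, hSH, -⟩ := h𝓑.bootClosure_eq _ hB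
    exact (subset_bootClosure _ _).trans (hS ▸ hSH)
  refine ⟨?_, fun v hv => ?_, ?_, ?_⟩
  · push_cast
    refine (h𝓑.pairwiseDisjoint.subset Set.sdiff_subset).insert fun B hB _ => ?_
    obtain ⟨hB, hB₁B, hB₂B⟩ : B ∈ 𝓑 ∧ B ≠ B₁ ∧ B ≠ B₂ := by simpa using hB
    exact Set.disjoint_union_left.2 ⟨h𝓑.pairwiseDisjoint hB₁ hB hB₁B.symm,
      h𝓑.pairwiseDisjoint hB₂ hB hB₂B.symm⟩
  · obtain ⟨B, hB, hvB⟩ := h𝓑.covers hv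
    by_cases hB' : B = B₁ ∨ B = B₂
    · exact ⟨B₁ ∪ B₂, by simp, by rcases hB' with rfl | rfl <;> simp [hvB]⟩
    · exact ⟨B, by simp_all, hvB⟩
  · simp only [Finset.mem_insert, Finset.mem_sdiff]
    rintro B (rfl | ⟨hB, -⟩)
    exacts [Set.union_subset (h𝓑.subset B₁ hB₁) (h𝓑.subset B₂ hB₂), h𝓑.subset B hB]
  · simp only [Finset.mem_insert, Finset.mem_sdiff]
    rintro B (rfl | ⟨hB, -⟩)
    · exact ⟨S, hS, hS ▸ (isBootClosed_projSet SH).bootClosure_subset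
        (Set.union_subset (hsub hB₁) (hsub hB₂)), hdim⟩
    · exact h𝓑.bootClosure_eq B hB

lemma card_insert_sdiff_pair_lt {α : Type*} [DecidableEq α] {s : Finset α} {a b : α}
    (ha : a ∈ s) (hb : b ∈ s) (hab : a ≠ b) (c : α) : (insert c (s \ {a, b})).card < s.card := by
  have hsub : {a, b} ⊆ s := Finset.insert_subset ha (Finset.singleton_subset_iff.2 hb)
  have := Finset.card_le_card hsub
  have := Finset.card_insert_le c (s \ {a, b})
  rw [Finset.card_sdiff_of_subset hsub, Finset.card_pair hab] at *
  omega

lemma IsSeedFamily.exists_close_pair (hk : 2 ≤ k)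
    (hspan : bootClosure (hamming n k) (A ∩ projSet SH) = projSet SH) (ht : t ≤ projDim SH)
    (h𝓑 : IsSeedFamily A SH t 𝓑) :
    ∃ B₁ ∈ 𝓑, ∃ B₂ ∈ 𝓑, B₁ ≠ B₂ ∧
      setDist (hamming n k) (bootClosure (hamming n k) B₁) (bootClosure (hamming n k) B₂) ≤ 2 := by
  by_contra! hfar
  set 𝒰 := bootClosure (hamming n k) '' (𝓑 : Set (Set (Fin n → Fin k)))
  have h𝒰 : 𝒰.Pairwise fun U W => 2 < setDist (hamming n k) U W := by
    rintro _ ⟨B₁, hB₁, rfl⟩ _ ⟨B₂, hB₂, rfl⟩ hne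
    exact hfar B₁ hB₁ B₂ hB₂ fun h => hne (h ▸ rfl)
  have hcov : projSet SH ⊆ ⋃₀ 𝒰 :=
    hspan ▸ (isBootClosed_sUnion (by simp [𝒰, isBootClosed_bootClosure]) h𝒰).bootClosure_subset
      (h𝓑.covers.trans (Set.sUnion_mono_subsets (subset_bootClosure _)))
  obtain ⟨_, ⟨B, hB, rfl⟩, hSH⟩ :=
    exists_projSet_subset_of_subset_sUnion (by omega) hcov (h𝒰.imp fun _ _ h => by omega)
  obtain ⟨S, hS, -, hdim⟩ := h𝓑.bootClosure_eq B hB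
  have := projDim_le_of_projSet_subset hk (hS ▸ hSH)
  omega

theorem IsSeedFamily.exists_spanning_pair (hk : 2 ≤ k)
    (hspan : bootClosure (hamming n k) (A ∩ projSet SH) = projSet SH) (ht : t ≤ projDim SH)
    (h𝓑 : IsSeedFamily A SH t 𝓑) :
    ∃ (B₁ B₂ : Set (Fin n → Fin k)) (S₁ S₂ Sℓ : Fin n → Option (Fin k)),
      B₁ ⊆ A ∧ B₂ ⊆ A ∧ Disjoint B₁ B₂ ∧
      bootClosure (hamming n k) B₁ = projSet S₁ ∧ bootClosure (hamming n k) B₂ = projSet S₂ ∧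
      projDim S₂ ≤ projDim S₁ ∧ projDim S₁ < t ∧
      setDist (hamming n k) (projSet S₁) (projSet S₂) ≤ 2 ∧
      bootClosure (hamming n k) (projSet S₁ ∪ projSet S₂) = projSet Sℓ ∧ t ≤ projDim Sℓ := by
  induction hm : 𝓑.card using Nat.strong_induction_on generalizing 𝓑 with
  | _ m ih =>
    obtain ⟨B₁, hB₁, B₂, hB₂, hne, hdist⟩ := h𝓑.exists_close_pair hk hspan ht
    obtain ⟨S₁, hS₁, -, hdim₁⟩ := h𝓑.bootClosure_eq B₁ hB₁
    obtain ⟨S₂, hS₂, -, hdim₂⟩ := h𝓑.bootClosure_eq B₂ hB₂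
    rw [hS₁, hS₂] at hdist
    have hmerge := bootClosure_projSet_union hk hdist
    by_cases hℓ : t ≤ projDim (mergeProj S₁ S₂)
    · have hdisj : Disjoint B₁ B₂ := h𝓑.pairwiseDisjoint hB₁ hB₂ hne
      rcases le_total (projDim S₂) (projDim S₁) with h | h
      · exact ⟨B₁, B₂, S₁, S₂, _, h𝓑.subset B₁ hB₁, h𝓑.subset B₂ hB₂, hdisj, hS₁, hS₂, h, hdim₁,
          hdist, hmerge, hℓ⟩
      · exact ⟨B₂, B₁, S₂, S₁, _, h𝓑.subset B₂ hB₂, h𝓑.subset B₁ hB₁, hdisj.symm, hS₂, hS₁, h,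
          hdim₂, setDist_comm _ _ _ ▸ hdist, Set.union_comm _ _ ▸ hmerge, hℓ⟩
    · have hB : bootClosure (hamming n k) (B₁ ∪ B₂) = projSet (mergeProj S₁ S₂) := by
        rw [← bootClosure_union_bootClosure, hS₁, hS₂, hmerge]
      exact ih _ (hm ▸ card_insert_sdiff_pair_lt hB₁ hB₂ hne _)
        (h𝓑.merge hB₁ hB₂ hB (not_le.1 hℓ)) rfl

end SeedFamily

end Development

theorem stmt7 (n k : ℕ) (hk : 2 ≤ k) (A : Set (Fin n → Fin k))
    (SH : Fin n → Option (Fin k))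
    (hspan : bootClosure (hamming n k) (A ∩ projSet SH) = projSet SH)
    (t : ℕ) (ht1 : 1 ≤ t) (ht2 : t ≤ projDim SH) :
    ∃ (ℓ i j d : ℕ) (Sℓ Si Sj : Fin n → Option (Fin k)),
      t ≤ ℓ ∧ j ≤ i ∧ i < t ∧ d ≤ 2 ∧
      projDim Sℓ = ℓ ∧ projDim Si = i ∧ projDim Sj = j ∧
      setDist (hamming n k) (projSet Si) (projSet Sj) = d ∧
      bootClosure (hamming n k) (projSet Si ∪ projSet Sj) = projSet Sℓ ∧
      ∃ Ai Aj : Set (Fin n → Fin k), Ai ⊆ A ∧ Aj ⊆ A ∧ Disjoint Ai Aj ∧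
        bootClosure (hamming n k) (Ai ∩ projSet Si) = projSet Si ∧
        bootClosure (hamming n k) (Aj ∩ projSet Sj) = projSet Sj := by
  obtain ⟨B₁, B₂, S₁, S₂, Sℓ, hB₁, hB₂, hdisj, hS₁, hS₂, hdim, hdim₁, hdist, hSℓ, hℓ⟩ :=
    (isSeedFamily_singletons (A := A) (SH := SH) ht1).exists_spanning_pair hk hspan ht2
  exact ⟨_, _, _, _, Sℓ, S₁, S₂, hℓ, hdim, hdim₁, hdist, rfl, rfl, rfl, rfl, hSℓ, B₁, B₂, hB₁, hB₂,
    hdisj, bootClosure_inter_eq hS₁, bootClosure_inter_eq hS₂⟩
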